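/- Let G=(V,E) be a weighted undirected connected simple locally finite graph with edge weights w_{xy}>0 and let x,y be neighboring vertices. Then κ(x,y) ≥ −(1 − w_{xy}/d_x − w_{xy}/d_y − ∑_{x₁∼x, x₁∼y} max(w_{x₁x}/d_x, w_{x₁y}/d_y))_+ − (1 − w_{xy}/d_x − w_{xy}/d_y − ∑_{x₁∼x, x₁∼y} min(w_{x₁x}/d_x, w_{x₁y}/d_y))_+ + ∑_{x₁∼x, x₁∼y} min(w_{x₁x}/d_x, w_{x₁y}/d_y), where the sums run over all common neighbors x₁ of x and y. -/
import Mathlib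


open SimpleGraph Finset

set_option maxHeartbeats 4000000

variable {V : Type*}

/-- A system of edge weights on `G`: symmetric, positive on edges and zero elsewhere. -/
def IsWeight (G : SimpleGraph V) (w : V → V → ℝ) : Prop :=
  (∀ u v, w u v = w v u) ∧ (∀ u v, G.Adj u v → 0 < w u v) ∧ (∀ u v, ¬G.Adj u v → w u v = 0)

/-- The weighted degree `d_x = ∑_{y∼x} w_{xy}`. -/
noncomputable def wdeg (G : SimpleGraph V) [G.LocallyFinite] (w : V → V → ℝ) (x : V) : ℝ :=
  ∑ y ∈ G.neighborFinset x, w x y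

/-- The probability measure attached to a vertex `x`: `m_x(z) = w_{xz}/d_x` for `z ∼ x`. -/
noncomputable def wMeasure (G : SimpleGraph V) [G.LocallyFinite] [DecidableRel G.Adj]
    (w : V → V → ℝ) (x z : V) : ℝ :=
  if G.Adj x z then w x z / wdeg G w x else 0

/-- A coupling (transfer plan) between the measures `m_x` and `m_y`. -/
def IsWCoupling (G : SimpleGraph V) [G.LocallyFinite] [DecidableRel G.Adj]
    (w : V → V → ℝ) (x y : V) (ξ : V → V → ℝ) : Prop :=
  (∀ u v, 0 ≤ ξ u v) ∧
  (∀ u v, ξ u v ≠ 0 → G.Adj x u ∧ G.Adj y v) ∧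
  (∀ u, ∑ v ∈ G.neighborFinset y, ξ u v = wMeasure G w x u) ∧
  (∀ v, ∑ u ∈ G.neighborFinset x, ξ u v = wMeasure G w y v)

/-- The transportation distance `W₁(m_x, m_y)`. -/
noncomputable def wW1 (G : SimpleGraph V) [G.LocallyFinite] [DecidableRel G.Adj]
    (w : V → V → ℝ) (x y : V) : ℝ :=
  sInf { c : ℝ | ∃ ξ : V → V → ℝ, IsWCoupling G w x y ξ ∧
    c = ∑ u ∈ G.neighborFinset x, ∑ v ∈ G.neighborFinset y, (G.dist u v : ℝ) * ξ u v }

/-- Ollivier's Ricci curvature `κ(x,y) = 1 - W₁(m_x,m_y)/d(x,y)` on a weighted graph. -/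
noncomputable def wRicci (G : SimpleGraph V) [G.LocallyFinite] [DecidableRel G.Adj]
    (w : V → V → ℝ) (x y : V) : ℝ :=
  1 - wW1 G w x y / (G.dist x y : ℝ)

/-- Positive part of a real number: `a₊ = max a 0`. -/
noncomputable def posPart' (a : ℝ) : ℝ := max a 0

/-- Overlap length of the real intervals `[α, β)` and `[γ, δ)`. -/
noncomputable def olap (α β γ δ : ℝ) : ℝ := max 0 (min β δ - max α γ)

lemma olap_nonneg (α β γ δ : ℝ) : 0 ≤ olap α β γ δ := le_max_left _ _

lemma olap_le_left {α β : ℝ} (γ δ : ℝ) (h : α ≤ β) : olap α β γ δ ≤ β - α := by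
  unfold olap; simp only [min_def, max_def]; split_ifs <;> linarith

lemma olap_le_right (α β : ℝ) {γ δ : ℝ} (h : γ ≤ δ) : olap α β γ δ ≤ δ - γ := by
  unfold olap; simp only [min_def, max_def]; split_ifs <;> linarith

lemma olap_comm (α β γ δ : ℝ) : olap α β γ δ = olap γ δ α β := by
  unfold olap; rw [min_comm β δ, max_comm α γ]

lemma olap_add {α β γ δ ε : ℝ} (hab : α ≤ β) (h1 : γ ≤ δ) (h2 : δ ≤ ε) :
    olap α β γ δ + olap α β δ ε = olap α β γ ε := by
  unfold olap; simp only [min_def, max_def]; split_ifs <;> linarith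

lemma olap_total {α β T : ℝ} (h0 : 0 ≤ α) (h1 : α ≤ β) (h2 : β ≤ T) :
    olap α β 0 T = β - α := by
  unfold olap; simp only [min_def, max_def]; split_ifs <;> linarith

lemma olap_row {α β T c1 c2 : ℝ} (h0 : 0 ≤ α) (h1 : α ≤ β) (h2 : β ≤ T)
    (k1 : 0 ≤ c1) (k2 : c1 ≤ c2) (k3 : c2 ≤ T) :
    olap α β 0 c1 + olap α β c1 c2 + olap α β c2 T = β - α := by
  rw [olap_add h1 k1 k2, olap_add h1 (le_trans k1 k2) k3, olap_total h0 h1 h2]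

/-- min + positive part of difference recovers the first argument. -/
lemma min_add_posdiff (c d : ℝ) : min c d + max (c - d) 0 = c := by
  rcases le_total c d with h|h <;> simp [min_def, max_def] <;> split_ifs <;> linarith

lemma max_eq_min_add (c d : ℝ) : max c d = min c d + max (c - d) 0 + max (d - c) 0 := by
  rcases le_total c d with h|h <;> simp [min_def, max_def] <;> split_ifs <;> linarith

/-- Exchange a `Finset` sum with a double `Fin 3` sum. -/
lemma sum_swap3 {s : Finset V} (f : V → Fin 3 → Fin 3 → ℝ) :
    ∑ z ∈ s, ∑ i : Fin 3, ∑ j : Fin 3, f z i j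
      = ∑ i : Fin 3, ∑ j : Fin 3, ∑ z ∈ s, f z i j := by
  rw [Finset.sum_comm]
  exact Finset.sum_congr rfl fun i _ => Finset.sum_comm

/-- On a weighted connected locally finite graph, for neighbors `x ∼ y`,
`κ(x,y) ≥ -(1 - w_{xy}/d_x - w_{xy}/d_y - ∑_{x₁∼x, x₁∼y} (w_{x₁x}/d_x) ∨ (w_{x₁y}/d_y))₊
  - (1 - w_{xy}/d_x - w_{xy}/d_y - ∑_{x₁∼x, x₁∼y} (w_{x₁x}/d_x) ∧ (w_{x₁y}/d_y))₊
  + ∑_{x₁∼x, x₁∼y} (w_{x₁x}/d_x) ∧ (w_{x₁y}/d_y)`. -/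
theorem wricci_lower_bound_triangles (G : SimpleGraph V) [G.LocallyFinite]
    [DecidableRel G.Adj] [DecidableEq V]
    (w : V → V → ℝ) (hw : IsWeight G w)
    (hG : G.Connected) (x y : V) (hxy : G.Adj x y) :
    wRicci G w x y ≥
      -posPart' (1 - w x y / wdeg G w x - w x y / wdeg G w y -
          ∑ z ∈ G.neighborFinset x ∩ G.neighborFinset y,
            max (w z x / wdeg G w x) (w z y / wdeg G w y))
      - posPart' (1 - w x y / wdeg G w x - w x y / wdeg G w y -
          ∑ z ∈ G.neighborFinset x ∩ G.neighborFinset y,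
            min (w z x / wdeg G w x) (w z y / wdeg G w y))
      + ∑ z ∈ G.neighborFinset x ∩ G.neighborFinset y,
          min (w z x / wdeg G w x) (w z y / wdeg G w y) := by
  obtain ⟨hsym, hpos, hzero⟩ := hw
  have hy_mem : y ∈ G.neighborFinset x := by simpa using hxy
  have hx_mem : x ∈ G.neighborFinset y := by simpa using hxy.symm
  set Nx := G.neighborFinset x with hNx
  set Ny := G.neighborFinset y with hNy
  set Cmn := Nx ∩ Ny with hCmn
  set dx := wdeg G w x with hdx
  set dy := wdeg G w y with hdy
  have hmemNx : ∀ u, u ∈ Nx ↔ G.Adj x u := fun u => by rw [hNx, mem_neighborFinset]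
  have hmemNy : ∀ v, v ∈ Ny ↔ G.Adj y v := fun v => by rw [hNy, mem_neighborFinset]
  have hdxpos : 0 < dx := by
    rw [hdx, wdeg]
    apply Finset.sum_pos
    · intro i hi; exact hpos _ _ (by simpa using hi)
    · exact ⟨y, hy_mem⟩
  have hdypos : 0 < dy := by
    rw [hdy, wdeg]
    apply Finset.sum_pos
    · intro i hi; exact hpos _ _ (by simpa using hi)
    · exact ⟨x, hx_mem⟩
  set μ := wMeasure G w x with hμdef
  set ν := wMeasure G w y with hνdef
  have hμ_eq : ∀ u ∈ Nx, μ u = w x u / dx := by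
    intro u hu; rw [hμdef, wMeasure, if_pos ((hmemNx u).mp hu)]
  have hν_eq : ∀ v ∈ Ny, ν v = w y v / dy := by
    intro v hv; rw [hνdef, wMeasure, if_pos ((hmemNy v).mp hv)]
  have hμ_zero : ∀ u, u ∉ Nx → μ u = 0 := by
    intro u hu; rw [hμdef, wMeasure, if_neg (fun h => hu ((hmemNx u).mpr h))]
  have hν_zero : ∀ v, v ∉ Ny → ν v = 0 := by
    intro v hv; rw [hνdef, wMeasure, if_neg (fun h => hv ((hmemNy v).mpr h))]
  have hμnn : ∀ u, 0 ≤ μ u := by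
    intro u
    by_cases hu : u ∈ Nx
    · rw [hμ_eq u hu]; exact div_nonneg (hpos _ _ ((hmemNx u).mp hu)).le hdxpos.le
    · rw [hμ_zero u hu]
  have hνnn : ∀ v, 0 ≤ ν v := by
    intro v
    by_cases hv : v ∈ Ny
    · rw [hν_eq v hv]; exact div_nonneg (hpos _ _ ((hmemNy v).mp hv)).le hdypos.le
    · rw [hν_zero v hv]
  have hμsum : ∑ u ∈ Nx, μ u = 1 := by
    rw [Finset.sum_congr rfl hμ_eq, ← Finset.sum_div]
    rw [show ∑ u ∈ Nx, w x u = dx from rfl]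
    exact div_self hdxpos.ne'
  have hνsum : ∑ v ∈ Ny, ν v = 1 := by
    rw [Finset.sum_congr rfl hν_eq, ← Finset.sum_div]
    rw [show ∑ v ∈ Ny, w y v = dy from rfl]
    exact div_self hdypos.ne'
  set a := w x y / dx with hadef
  set b := w x y / dy with hbdef
  have ha : 0 < a := div_pos (hpos _ _ hxy) hdxpos
  have hb : 0 < b := div_pos (hpos _ _ hxy) hdypos
  have hμy : μ y = a := by rw [hμ_eq y hy_mem]
  have hνx : ν x = b := by
    rw [hν_eq x hx_mem, hsym y x]
  -- rewrite the sums appearing in the goal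
  have hS_rw : (∑ z ∈ Cmn, min (w z x / dx) (w z y / dy)) = ∑ z ∈ Cmn, min (μ z) (ν z) := by
    refine Finset.sum_congr rfl fun z hz => ?_
    obtain ⟨h1, h2⟩ := Finset.mem_inter.mp hz
    rw [hμ_eq z h1, hν_eq z h2, hsym z x, hsym z y]
  have hSmax_rw : (∑ z ∈ Cmn, max (w z x / dx) (w z y / dy)) = ∑ z ∈ Cmn, max (μ z) (ν z) := by
    refine Finset.sum_congr rfl fun z hz => ?_
    obtain ⟨h1, h2⟩ := Finset.mem_inter.mp hz
    rw [hμ_eq z h1, hν_eq z h2, hsym z x, hsym z y]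
  rw [hS_rw, hSmax_rw]
  set S := ∑ z ∈ Cmn, min (μ z) (ν z) with hSdef
  set Smax := ∑ z ∈ Cmn, max (μ z) (ν z) with hSmaxdef
  -- the building blocks
  set δf : V → ℝ := fun z => if z ∈ Cmn then min (μ z) (ν z) else 0 with hδdef
  set p : V → ℝ := fun z => if z ∈ Cmn then max (μ z - ν z) 0 else 0 with hpdef
  set q : V → ℝ := fun z => if z ∈ Cmn then max (ν z - μ z) 0 else 0 with hqdef
  set Restx := Nx \ insert y Cmn with hRestx
  set Resty := Ny \ insert x Cmn with hResty
  set Dx := ∑ z ∈ Cmn, p z with hDxdef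
  set Dy := ∑ z ∈ Cmn, q z with hDydef
  set Rx := ∑ u ∈ Restx, μ u with hRxdef
  set Ry := ∑ v ∈ Resty, ν v with hRydef
  have hy_notC : y ∉ Cmn := by
    rw [hCmn]; intro h
    exact G.irrefl ((hmemNy y).mp (Finset.mem_inter.mp h).2)
  have hx_notC : x ∉ Cmn := by
    rw [hCmn]; intro h
    exact G.irrefl ((hmemNx x).mp (Finset.mem_inter.mp h).1)
  have hCsubNx : Cmn ⊆ Nx := Finset.inter_subset_left
  have hCsubNy : Cmn ⊆ Ny := Finset.inter_subset_right
  have hpnn : ∀ z, 0 ≤ p z := by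
    intro z; rw [hpdef]; dsimp only; split_ifs; exacts [le_max_right _ _, le_refl 0]
  have hqnn : ∀ z, 0 ≤ q z := by
    intro z; rw [hqdef]; dsimp only; split_ifs; exacts [le_max_right _ _, le_refl 0]
  have hp_zero : ∀ z, z ∉ Cmn → p z = 0 := by
    intro z hz; rw [hpdef]; exact if_neg hz
  have hq_zero : ∀ z, z ∉ Cmn → q z = 0 := by
    intro z hz; rw [hqdef]; exact if_neg hz
  have hδnn : ∀ z, 0 ≤ δf z := by
    intro z; rw [hδdef]; dsimp only; split_ifs with h
    · exact le_min (hμnn z) (hνnn z)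
    · exact le_refl 0
  have hδ_zero : ∀ z, z ∉ Cmn → δf z = 0 := by
    intro z hz; rw [hδdef]; exact if_neg hz
  have hDxnn : 0 ≤ Dx := Finset.sum_nonneg fun z _ => hpnn z
  have hDynn : 0 ≤ Dy := Finset.sum_nonneg fun z _ => hqnn z
  have hRxnn : 0 ≤ Rx := Finset.sum_nonneg fun u _ => hμnn u
  have hRynn : 0 ≤ Ry := Finset.sum_nonneg fun v _ => hνnn v
  have hinsubx : insert y Cmn ⊆ Nx := Finset.insert_subset_iff.mpr ⟨hy_mem, hCsubNx⟩
  have hinsuby : insert x Cmn ⊆ Ny := Finset.insert_subset_iff.mpr ⟨hx_mem, hCsubNy⟩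
  have hTx : a + Dx + Rx = 1 - S := by
    have h1 : ∑ u ∈ Restx, μ u + ∑ u ∈ insert y Cmn, μ u = ∑ u ∈ Nx, μ u :=
      Finset.sum_sdiff hinsubx
    have h2 : ∑ u ∈ insert y Cmn, μ u = a + ∑ z ∈ Cmn, μ z := by
      rw [Finset.sum_insert hy_notC, hμy]
    have h3 : ∑ z ∈ Cmn, μ z = S + Dx := by
      rw [hSdef, hDxdef, ← Finset.sum_add_distrib]
      refine Finset.sum_congr rfl fun z hz => ?_
      rw [hpdef]; dsimp only; rw [if_pos hz, min_add_posdiff]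
    rw [h2, h3, hμsum] at h1
    rw [← hRxdef] at h1
    linarith
  have hTy : b + Dy + Ry = 1 - S := by
    have h1 : ∑ v ∈ Resty, ν v + ∑ v ∈ insert x Cmn, ν v = ∑ v ∈ Ny, ν v :=
      Finset.sum_sdiff hinsuby
    have h2 : ∑ v ∈ insert x Cmn, ν v = b + ∑ z ∈ Cmn, ν z := by
      rw [Finset.sum_insert hx_notC, hνx]
    have h3 : ∑ z ∈ Cmn, ν z = S + Dy := by
      rw [hSdef, hDydef, ← Finset.sum_add_distrib]
      refine Finset.sum_congr rfl fun z hz => ?_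
      rw [hqdef]; dsimp only; rw [if_pos hz, min_comm, min_add_posdiff]
    rw [h2, h3, hνsum] at h1
    rw [← hRydef] at h1
    linarith
  have hSmaxS : Smax = S + Dx + Dy := by
    rw [hSmaxdef, hSdef, hDxdef, hDydef, ← Finset.sum_add_distrib, ← Finset.sum_add_distrib]
    refine Finset.sum_congr rfl fun z hz => ?_
    rw [hpdef, hqdef]; dsimp only; rw [if_pos hz, if_pos hz, max_eq_min_add]
  
  -- block masses and overlap matrix
  set m : Fin 3 → ℝ := ![a, Dx, Rx] with hm
  set m' : Fin 3 → ℝ := ![Ry, Dy, b] with hm'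
  set cxl : Fin 3 → ℝ := ![0, a, a + Dx] with hcxl
  set cxr : Fin 3 → ℝ := ![a, a + Dx, 1 - S] with hcxr
  set cyl : Fin 3 → ℝ := ![0, Ry, Ry + Dy] with hcyl
  set cyr : Fin 3 → ℝ := ![Ry, Ry + Dy, 1 - S] with hcyr
  set M : Fin 3 → Fin 3 → ℝ := fun i j => olap (cxl i) (cxr i) (cyl j) (cyr j) with hM
  have hcx : ∀ i : Fin 3, 0 ≤ cxl i ∧ cxl i ≤ cxr i ∧ cxr i ≤ 1 - S ∧ cxr i - cxl i = m i := by
    intro i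
    fin_cases i <;> refine ⟨?_, ?_, ?_, ?_⟩ <;> simp [hcxl, hcxr, hm] <;> linarith
  have hcy : ∀ j : Fin 3, 0 ≤ cyl j ∧ cyl j ≤ cyr j ∧ cyr j ≤ 1 - S ∧ cyr j - cyl j = m' j := by
    intro j
    fin_cases j <;> refine ⟨?_, ?_, ?_, ?_⟩ <;> simp [hcyl, hcyr, hm'] <;> linarith
  have ey0 : cyl 0 = 0 := by simp [hcyl]
  have ey0' : cyr 0 = Ry := by simp [hcyr]
  have ey1 : cyl 1 = Ry := by simp [hcyl]
  have ey1' : cyr 1 = Ry + Dy := by simp [hcyr]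
  have ey2 : cyl 2 = Ry + Dy := by simp [hcyl]
  have ey2' : cyr 2 = 1 - S := by simp [hcyr]
  have ex0 : cxl 0 = 0 := by simp [hcxl]
  have ex0' : cxr 0 = a := by simp [hcxr]
  have ex1 : cxl 1 = a := by simp [hcxl]
  have ex1' : cxr 1 = a + Dx := by simp [hcxr]
  have ex2 : cxl 2 = a + Dx := by simp [hcxl]
  have ex2' : cxr 2 = 1 - S := by simp [hcxr]
  have hrow : ∀ i, M i 0 + M i 1 + M i 2 = m i := by
    intro i
    obtain ⟨h1, h2, h3, h4⟩ := hcx i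
    have h5 := olap_row h1 h2 h3 hRynn (by linarith : Ry ≤ Ry + Dy)
      (by linarith : Ry + Dy ≤ 1 - S)
    rw [hM]; dsimp only
    rw [ey0, ey0', ey1, ey1', ey2, ey2', h5, h4]
  have hcol : ∀ j, M 0 j + M 1 j + M 2 j = m' j := by
    intro j
    obtain ⟨h1, h2, h3, h4⟩ := hcy j
    have h5 := olap_row h1 h2 h3 ha.le (by linarith : a ≤ a + Dx)
      (by linarith : a + Dx ≤ 1 - S)
    rw [hM]; dsimp only
    rw [olap_comm, olap_comm (cxl 1), olap_comm (cxl 2)]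
    rw [ex0, ex0', ex1, ex1', ex2, ex2', h5, h4]
  have hMnn : ∀ i j, 0 ≤ M i j := by
    intro i j; rw [hM]; exact olap_nonneg _ _ _ _
  have hMle_m : ∀ i j, M i j ≤ m i := by
    intro i j
    obtain ⟨_, h2, _, h4⟩ := hcx i
    rw [hM]; dsimp only; rw [← h4]
    exact olap_le_left _ _ h2
  have hMle_m' : ∀ i j, M i j ≤ m' j := by
    intro i j
    obtain ⟨_, h2, _, h4⟩ := hcy j
    rw [hM]; dsimp only; rw [← h4]
    exact olap_le_right _ _ h2
  have hMzx : ∀ i j, m i = 0 → M i j = 0 := by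
    intro i j h
    exact le_antisymm ((hMle_m i j).trans (le_of_eq h)) (hMnn i j)
  have hMzy : ∀ i j, m' j = 0 → M i j = 0 := by
    intro i j h
    exact le_antisymm ((hMle_m' i j).trans (le_of_eq h)) (hMnn i j)
  
  -- normalized block densities
  set B : Fin 3 → V → ℝ := ![fun u => if u = y then 1 else 0,
    fun u => if Dx = 0 then 0 else p u / Dx,
    fun u => if Rx = 0 then 0 else if u ∈ Restx then μ u / Rx else 0] with hB
  set Gm : Fin 3 → V → ℝ := ![fun v => if Ry = 0 then 0 else if v ∈ Resty then ν v / Ry else 0,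
    fun v => if Dy = 0 then 0 else q v / Dy,
    fun v => if v = x then 1 else 0] with hGm
  have hB0e : ∀ u, B 0 u = if u = y then 1 else 0 := by intro u; rw [hB]; simp
  have hB1e : ∀ u, B 1 u = if Dx = 0 then 0 else p u / Dx := by intro u; rw [hB]; simp
  have hB2e : ∀ u, B 2 u = if Rx = 0 then 0 else if u ∈ Restx then μ u / Rx else 0 := by
    intro u; rw [hB]; simp
  have hG0e : ∀ v, Gm 0 v = if Ry = 0 then 0 else if v ∈ Resty then ν v / Ry else 0 := by
    intro v; rw [hGm]; simp
  have hG1e : ∀ v, Gm 1 v = if Dy = 0 then 0 else q v / Dy := by intro v; rw [hGm]; simp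
  have hG2e : ∀ v, Gm 2 v = if v = x then 1 else 0 := by intro v; rw [hGm]; simp
  have hme : m 0 = a ∧ m 1 = Dx ∧ m 2 = Rx := by
    refine ⟨?_, ?_, ?_⟩ <;> rw [hm] <;> simp
  have hm'e : m' 0 = Ry ∧ m' 1 = Dy ∧ m' 2 = b := by
    refine ⟨?_, ?_, ?_⟩ <;> rw [hm'] <;> simp
  have hBnn : ∀ i u, 0 ≤ B i u := by
    intro i u
    fin_cases i
    · rw [show (⟨0, by norm_num⟩ : Fin 3) = 0 from rfl, hB0e]
      split_ifs <;> norm_num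
    · rw [show (⟨1, by norm_num⟩ : Fin 3) = 1 from rfl, hB1e]
      split_ifs
      · norm_num
      · exact div_nonneg (hpnn u) hDxnn
    · rw [show (⟨2, by norm_num⟩ : Fin 3) = 2 from rfl, hB2e]
      split_ifs
      · norm_num
      · exact div_nonneg (hμnn u) hRxnn
      · norm_num
  have hGnn : ∀ j v, 0 ≤ Gm j v := by
    intro j v
    fin_cases j
    · rw [show (⟨0, by norm_num⟩ : Fin 3) = 0 from rfl, hG0e]
      split_ifs
      · norm_num
      · exact div_nonneg (hνnn v) hRynn
      · norm_num
    · rw [show (⟨1, by norm_num⟩ : Fin 3) = 1 from rfl, hG1e]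
      split_ifs
      · norm_num
      · exact div_nonneg (hqnn v) hDynn
    · rw [show (⟨2, by norm_num⟩ : Fin 3) = 2 from rfl, hG2e]
      split_ifs <;> norm_num
  
  have hpDx : Dx = 0 → ∀ z, p z = 0 := by
    intro h z
    by_cases hz : z ∈ Cmn
    · exact (Finset.sum_eq_zero_iff_of_nonneg (fun z _ => hpnn z)).mp h.symm.symm z hz
    · exact hp_zero z hz
  have hqDy : Dy = 0 → ∀ z, q z = 0 := by
    intro h z
    by_cases hz : z ∈ Cmn
    · exact (Finset.sum_eq_zero_iff_of_nonneg (fun z _ => hqnn z)).mp h z hz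
    · exact hq_zero z hz
  have hμRx : Rx = 0 → ∀ u ∈ Restx, μ u = 0 := by
    intro h u hu
    exact (Finset.sum_eq_zero_iff_of_nonneg (fun z _ => hμnn z)).mp h u hu
  have hνRy : Ry = 0 → ∀ v ∈ Resty, ν v = 0 := by
    intro h v hv
    exact (Finset.sum_eq_zero_iff_of_nonneg (fun z _ => hνnn z)).mp h v hv
  -- support of the densities
  have hBsupp0 : ∀ u, B 0 u ≠ 0 → u = y := by
    intro u h
    by_contra hne
    exact h (by rw [hB0e, if_neg hne])
  have hBsupp1 : ∀ u, B 1 u ≠ 0 → u ∈ Cmn := by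
    intro u h
    by_contra hc
    refine h ?_
    rw [hB1e]
    split_ifs with h'
    · rfl
    · rw [hp_zero u hc, zero_div]
  have hBsupp2 : ∀ u, B 2 u ≠ 0 → u ∈ Restx := by
    intro u h
    by_contra hc
    refine h ?_
    rw [hB2e]
    split_ifs <;> rfl
  have hBsupp : ∀ i u, B i u ≠ 0 → u ∈ Nx := by
    intro i u h
    fin_cases i
    · rw [show (⟨0, by norm_num⟩ : Fin 3) = 0 from rfl] at h
      rw [hBsupp0 u h]; exact hy_mem
    · rw [show (⟨1, by norm_num⟩ : Fin 3) = 1 from rfl] at h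
      exact hCsubNx (hBsupp1 u h)
    · rw [show (⟨2, by norm_num⟩ : Fin 3) = 2 from rfl] at h
      exact (Finset.mem_sdiff.mp (hBsupp2 u h)).1
  have hGsupp0 : ∀ v, Gm 0 v ≠ 0 → v ∈ Resty := by
    intro v h
    by_contra hc
    refine h ?_
    rw [hG0e]
    split_ifs <;> rfl
  have hGsupp1 : ∀ v, Gm 1 v ≠ 0 → v ∈ Cmn := by
    intro v h
    by_contra hc
    refine h ?_
    rw [hG1e]
    split_ifs with h'
    · rfl
    · rw [hq_zero v hc, zero_div]
  have hGsupp2 : ∀ v, Gm 2 v ≠ 0 → v = x := by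
    intro v h
    by_contra hne
    exact h (by rw [hG2e, if_neg hne])
  have hGsupp : ∀ j v, Gm j v ≠ 0 → v ∈ Ny := by
    intro j v h
    fin_cases j
    · rw [show (⟨0, by norm_num⟩ : Fin 3) = 0 from rfl] at h
      exact (Finset.mem_sdiff.mp (hGsupp0 v h)).1
    · rw [show (⟨1, by norm_num⟩ : Fin 3) = 1 from rfl] at h
      exact hCsubNy (hGsupp1 v h)
    · rw [show (⟨2, by norm_num⟩ : Fin 3) = 2 from rfl] at h
      rw [hGsupp2 v h]; exact hx_mem
  -- sums of the densities
  have hRxsub : Restx ⊆ Nx := by rw [hRestx]; exact Finset.sdiff_subset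
  have hRysub : Resty ⊆ Ny := by rw [hResty]; exact Finset.sdiff_subset
  have hBsum : ∀ i, m i ≠ 0 → ∑ u ∈ Nx, B i u = 1 := by
    intro i h
    fin_cases i
    · rw [show (⟨0, by norm_num⟩ : Fin 3) = 0 from rfl]
      rw [Finset.sum_congr rfl (fun u _ => hB0e u), Finset.sum_ite_eq' Nx y fun _ => (1:ℝ)]
      rw [if_pos hy_mem]
    · rw [show (⟨1, by norm_num⟩ : Fin 3) = 1 from rfl] at h ⊢
      rw [hme.2.1] at h
      have h1 : ∑ u ∈ Nx, B 1 u = ∑ u ∈ Nx, p u / Dx :=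
        Finset.sum_congr rfl fun u _ => by rw [hB1e, if_neg h]
      have h2 : ∑ u ∈ Cmn, p u = ∑ u ∈ Nx, p u :=
        Finset.sum_subset hCsubNx fun z _ hz => hp_zero z hz
      rw [h1, ← Finset.sum_div, ← h2, ← hDxdef, div_self h]
    · rw [show (⟨2, by norm_num⟩ : Fin 3) = 2 from rfl] at h ⊢
      rw [hme.2.2] at h
      have h1 : ∑ u ∈ Nx, B 2 u = ∑ u ∈ Restx, B 2 u :=
        (Finset.sum_subset hRxsub fun z _ hz => by
          rw [hB2e, if_neg h, if_neg hz]).symm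
      have h2 : ∑ u ∈ Restx, B 2 u = ∑ u ∈ Restx, μ u / Rx :=
        Finset.sum_congr rfl fun u hu => by rw [hB2e, if_neg h, if_pos hu]
      rw [h1, h2, ← Finset.sum_div, ← hRxdef, div_self h]
  have hGsum : ∀ j, m' j ≠ 0 → ∑ v ∈ Ny, Gm j v = 1 := by
    intro j h
    fin_cases j
    · rw [show (⟨0, by norm_num⟩ : Fin 3) = 0 from rfl] at h ⊢
      rw [hm'e.1] at h
      have h1 : ∑ v ∈ Ny, Gm 0 v = ∑ v ∈ Resty, Gm 0 v :=
        (Finset.sum_subset hRysub fun z _ hz => by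
          rw [hG0e, if_neg h, if_neg hz]).symm
      have h2 : ∑ v ∈ Resty, Gm 0 v = ∑ v ∈ Resty, ν v / Ry :=
        Finset.sum_congr rfl fun v hv => by rw [hG0e, if_neg h, if_pos hv]
      rw [h1, h2, ← Finset.sum_div, ← hRydef, div_self h]
    · rw [show (⟨1, by norm_num⟩ : Fin 3) = 1 from rfl] at h ⊢
      rw [hm'e.2.1] at h
      have h1 : ∑ v ∈ Ny, Gm 1 v = ∑ v ∈ Ny, q v / Dy :=
        Finset.sum_congr rfl fun v _ => by rw [hG1e, if_neg h]
      have h2 : ∑ v ∈ Cmn, q v = ∑ v ∈ Ny, q v :=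
        Finset.sum_subset hCsubNy fun z _ hz => hq_zero z hz
      rw [h1, ← Finset.sum_div, ← h2, ← hDydef, div_self h]
    · rw [show (⟨2, by norm_num⟩ : Fin 3) = 2 from rfl]
      rw [Finset.sum_congr rfl (fun v _ => hG2e v), Finset.sum_ite_eq' Ny x fun _ => (1:ℝ)]
      rw [if_pos hx_mem]
  have hBzero : ∀ i, m i = 0 → ∀ u, B i u = 0 := by
    intro i h u
    fin_cases i
    · rw [show (⟨0, by norm_num⟩ : Fin 3) = 0 from rfl, hme.1] at h
      exact absurd h ha.ne'
    · rw [show (⟨1, by norm_num⟩ : Fin 3) = 1 from rfl, hme.2.1] at h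
      rw [show (⟨1, by norm_num⟩ : Fin 3) = 1 from rfl, hB1e, if_pos h]
    · rw [show (⟨2, by norm_num⟩ : Fin 3) = 2 from rfl, hme.2.2] at h
      rw [show (⟨2, by norm_num⟩ : Fin 3) = 2 from rfl, hB2e, if_pos h]
  have hGzero : ∀ j, m' j = 0 → ∀ v, Gm j v = 0 := by
    intro j h v
    fin_cases j
    · rw [show (⟨0, by norm_num⟩ : Fin 3) = 0 from rfl, hm'e.1] at h
      rw [show (⟨0, by norm_num⟩ : Fin 3) = 0 from rfl, hG0e, if_pos h]
    · rw [show (⟨1, by norm_num⟩ : Fin 3) = 1 from rfl, hm'e.2.1] at h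
      rw [show (⟨1, by norm_num⟩ : Fin 3) = 1 from rfl, hG1e, if_pos h]
    · rw [show (⟨2, by norm_num⟩ : Fin 3) = 2 from rfl, hm'e.2.2] at h
      exact absurd h hb.ne'
  
  -- mass * density identities
  have hmB0 : ∀ u, m 0 * B 0 u = if u = y then a else 0 := by
    intro u
    rw [hme.1, hB0e]
    split_ifs <;> ring
  have hmB1 : ∀ u, m 1 * B 1 u = p u := by
    intro u
    rw [hme.2.1, hB1e]
    by_cases h : Dx = 0
    · rw [if_pos h, mul_zero, hpDx h u]
    · rw [if_neg h]; field_simp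
  have hmB2 : ∀ u, m 2 * B 2 u = if u ∈ Restx then μ u else 0 := by
    intro u
    rw [hme.2.2, hB2e]
    by_cases h : Rx = 0
    · rw [if_pos h, mul_zero]
      split_ifs with h'
      · rw [hμRx h u h']
      · rfl
    · rw [if_neg h]
      split_ifs with h'
      · field_simp
      · rw [mul_zero]
  have hyRestx : y ∉ Restx := by
    rw [hRestx]; simp
  have hxResty : x ∉ Resty := by
    rw [hResty]; simp
  have hmB : ∀ u, m 0 * B 0 u + m 1 * B 1 u + m 2 * B 2 u = μ u - δf u := by
    intro u
    rw [hmB0 u, hmB1 u, hmB2 u]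
    by_cases h1 : u = y
    · subst h1
      rw [if_pos rfl, if_neg hyRestx, hp_zero u hy_notC, hδ_zero u hy_notC, hμy]
      ring
    · by_cases h2 : u ∈ Cmn
      · have hR : u ∉ Restx := by
          rw [hRestx]
          intro hc
          exact (Finset.mem_sdiff.mp hc).2 (Finset.mem_insert_of_mem h2)
        rw [if_neg h1, if_neg hR]
        simp only [hpdef, hδdef]
        rw [if_pos h2, if_pos h2]
        have := min_add_posdiff (μ u) (ν u)
        linarith
      · by_cases h3 : u ∈ Nx
        · have hR : u ∈ Restx := by
            rw [hRestx]
            exact Finset.mem_sdiff.mpr ⟨h3, by simp [Finset.mem_insert, h1, h2]⟩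
          rw [if_neg h1, if_pos hR, hp_zero u h2, hδ_zero u h2]
          ring
        · have hR : u ∉ Restx := fun hc => h3 (hRxsub hc)
          rw [if_neg h1, if_neg hR, hp_zero u h2, hδ_zero u h2, hμ_zero u h3]
          ring
  have hmG0 : ∀ v, m' 0 * Gm 0 v = if v ∈ Resty then ν v else 0 := by
    intro v
    rw [hm'e.1, hG0e]
    by_cases h : Ry = 0
    · rw [if_pos h, mul_zero]
      split_ifs with h'
      · rw [hνRy h v h']
      · rfl
    · rw [if_neg h]
      split_ifs with h'
      · field_simp
      · rw [mul_zero]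
  have hmG1 : ∀ v, m' 1 * Gm 1 v = q v := by
    intro v
    rw [hm'e.2.1, hG1e]
    by_cases h : Dy = 0
    · rw [if_pos h, mul_zero, hqDy h v]
    · rw [if_neg h]; field_simp
  have hmG2 : ∀ v, m' 2 * Gm 2 v = if v = x then b else 0 := by
    intro v
    rw [hm'e.2.2, hG2e]
    split_ifs <;> ring
  have hmG : ∀ v, m' 0 * Gm 0 v + m' 1 * Gm 1 v + m' 2 * Gm 2 v = ν v - δf v := by
    intro v
    rw [hmG0 v, hmG1 v, hmG2 v]
    by_cases h1 : v = x
    · subst h1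
      rw [if_pos rfl, if_neg hxResty, hq_zero v hx_notC, hδ_zero v hx_notC, hνx]
      ring
    · by_cases h2 : v ∈ Cmn
      · have hR : v ∉ Resty := by
          rw [hResty]
          intro hc
          exact (Finset.mem_sdiff.mp hc).2 (Finset.mem_insert_of_mem h2)
        rw [if_neg h1, if_neg hR]
        simp only [hqdef, hδdef]
        rw [if_pos h2, if_pos h2]
        have h5 := min_add_posdiff (ν v) (μ v)
        rw [min_comm] at h5
        linarith
      · by_cases h3 : v ∈ Ny
        · have hR : v ∈ Resty := by
            rw [hResty]
            exact Finset.mem_sdiff.mpr ⟨h3, by simp [Finset.mem_insert, h1, h2]⟩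
          rw [if_neg h1, if_pos hR, hq_zero v h2, hδ_zero v h2]
          ring
        · have hR : v ∉ Resty := fun hc => h3 (hRysub hc)
          rw [if_neg h1, if_neg hR, hq_zero v h2, hδ_zero v h2, hν_zero v h3]
          ring
  
  -- the coupling
  set ξ : V → V → ℝ := fun u v =>
    (if u = v then δf u else 0) + ∑ i : Fin 3, ∑ j : Fin 3, M i j * (B i u * Gm j v) with hξ
  have hξnn : ∀ u v, 0 ≤ ξ u v := by
    intro u v
    simp only [hξ]
    apply add_nonneg
    · split_ifs
      · exact hδnn u
      · exact le_refl 0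
    · exact Finset.sum_nonneg fun i _ => Finset.sum_nonneg fun j _ =>
        mul_nonneg (hMnn i j) (mul_nonneg (hBnn i u) (hGnn j v))
  have hξzero_u : ∀ u v, u ∉ Nx → ξ u v = 0 := by
    intro u v hu
    simp only [hξ]
    have h1 : (if u = v then δf u else 0) = 0 := by
      split_ifs
      · exact hδ_zero u fun hc => hu (hCsubNx hc)
      · rfl
    have h2 : ∑ i : Fin 3, ∑ j : Fin 3, M i j * (B i u * Gm j v) = 0 := by
      refine Finset.sum_eq_zero fun i _ => Finset.sum_eq_zero fun j _ => ?_
      have hBz : B i u = 0 := by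
        by_contra hne
        exact hu (hBsupp i u hne)
      rw [hBz, zero_mul, mul_zero]
    rw [h1, h2, add_zero]
  have hξzero_v : ∀ u v, v ∉ Ny → ξ u v = 0 := by
    intro u v hv
    simp only [hξ]
    have h1 : (if u = v then δf u else 0) = 0 := by
      split_ifs with h
      · subst h; exact hδ_zero u fun hc => hv (hCsubNy hc)
      · rfl
    have h2 : ∑ i : Fin 3, ∑ j : Fin 3, M i j * (B i u * Gm j v) = 0 := by
      refine Finset.sum_eq_zero fun i _ => Finset.sum_eq_zero fun j _ => ?_
      have hGz : Gm j v = 0 := by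
        by_contra hne
        exact hv (hGsupp j v hne)
      rw [hGz, mul_zero, mul_zero]
    rw [h1, h2, add_zero]
  have hsupp : ∀ u v, ξ u v ≠ 0 → G.Adj x u ∧ G.Adj y v := by
    intro u v h
    constructor
    · by_contra hadj
      exact h (hξzero_u u v fun hm => hadj ((hmemNx u).mp hm))
    · by_contra hadj
      exact h (hξzero_v u v fun hm => hadj ((hmemNy v).mp hm))
  have hrowmarg : ∀ u, ∑ v ∈ Ny, ξ u v = μ u := by
    intro u
    simp only [hξ]
    rw [Finset.sum_add_distrib]
    have hd : ∑ v ∈ Ny, (if u = v then δf u else 0) = δf u := by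
      rw [Finset.sum_ite_eq Ny u fun _ => δf u]
      split_ifs with h
      · rfl
      · exact (hδ_zero u fun hc => h (hCsubNy hc)).symm
    have hp2 : ∑ v ∈ Ny, ∑ i : Fin 3, ∑ j : Fin 3, M i j * (B i u * Gm j v) = μ u - δf u := by
      rw [sum_swap3 fun v i j => M i j * (B i u * Gm j v)]
      have h1 : ∀ i j, ∑ v ∈ Ny, M i j * (B i u * Gm j v) = M i j * B i u := by
        intro i j
        rw [Finset.sum_congr rfl fun v _ => show M i j * (B i u * Gm j v)
          = (M i j * B i u) * Gm j v from by ring, ← Finset.mul_sum]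
        by_cases hmj : m' j = 0
        · rw [hMzy i j hmj]; ring
        · rw [hGsum j hmj, mul_one]
      have h2 : ∀ i, ∑ j : Fin 3, M i j * B i u = m i * B i u := by
        intro i
        rw [Fin.sum_univ_three, ← hrow i]
        ring
      calc ∑ i : Fin 3, ∑ j : Fin 3, ∑ v ∈ Ny, M i j * (B i u * Gm j v)
          = ∑ i : Fin 3, m i * B i u := by
            refine Finset.sum_congr rfl fun i _ => ?_
            rw [Finset.sum_congr rfl fun j _ => h1 i j, h2 i]
        _ = μ u - δf u := by rw [Fin.sum_univ_three]; exact hmB u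
    rw [hd, hp2]
    ring
  have hcolmarg : ∀ v, ∑ u ∈ Nx, ξ u v = ν v := by
    intro v
    simp only [hξ]
    rw [Finset.sum_add_distrib]
    have hd : ∑ u ∈ Nx, (if u = v then δf u else 0) = δf v := by
      rw [Finset.sum_ite_eq' Nx v fun u => δf u]
      split_ifs with h
      · rfl
      · exact (hδ_zero v fun hc => h (hCsubNx hc)).symm
    have hp2 : ∑ u ∈ Nx, ∑ i : Fin 3, ∑ j : Fin 3, M i j * (B i u * Gm j v) = ν v - δf v := by
      rw [sum_swap3 fun u i j => M i j * (B i u * Gm j v)]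
      have h1 : ∀ i j, ∑ u ∈ Nx, M i j * (B i u * Gm j v) = M i j * Gm j v := by
        intro i j
        rw [Finset.sum_congr rfl fun u _ => show M i j * (B i u * Gm j v)
          = (M i j * Gm j v) * B i u from by ring, ← Finset.mul_sum]
        by_cases hmi : m i = 0
        · rw [hMzx i j hmi]; ring
        · rw [hBsum i hmi, mul_one]
      have h2 : ∀ j, ∑ i : Fin 3, M i j * Gm j v = m' j * Gm j v := by
        intro j
        rw [Fin.sum_univ_three, ← hcol j]
        ring
      calc ∑ i : Fin 3, ∑ j : Fin 3, ∑ u ∈ Nx, M i j * (B i u * Gm j v)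
          = ∑ i : Fin 3, ∑ j : Fin 3, M i j * Gm j v := by
            exact Finset.sum_congr rfl fun i _ => Finset.sum_congr rfl fun j _ => h1 i j
        _ = ∑ j : Fin 3, ∑ i : Fin 3, M i j * Gm j v := Finset.sum_comm
        _ = ∑ j : Fin 3, m' j * Gm j v :=
            Finset.sum_congr rfl fun j _ => h2 j
        _ = ν v - δf v := by rw [Fin.sum_univ_three]; exact hmG v
    rw [hd, hp2]
    ring
  have hcoup : IsWCoupling G w x y ξ := ⟨hξnn, hsupp, hrowmarg, hcolmarg⟩
  
  -- distance estimates
  have hd_yv : ∀ v ∈ Ny, G.dist y v = 1 := by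
    intro v hv
    exact SimpleGraph.dist_eq_one_iff_adj.mpr ((hmemNy v).mp hv)
  have hd_ux : ∀ u ∈ Nx, G.dist u x = 1 := by
    intro u hu
    rw [SimpleGraph.dist_comm]
    exact SimpleGraph.dist_eq_one_iff_adj.mpr ((hmemNx u).mp hu)
  have e_y : ∀ v ∈ Ny, (G.dist y v : ℝ) ≤ 1 := by
    intro v hv; rw [hd_yv v hv]; norm_num
  have e_x : ∀ u ∈ Nx, (G.dist u x : ℝ) ≤ 1 := by
    intro u hu; rw [hd_ux u hu]; norm_num
  have e_C : ∀ u ∈ Cmn, ∀ v ∈ Ny, (G.dist u v : ℝ) ≤ 2 := by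
    intro u hu v hv
    have h1 : G.dist u v ≤ G.dist u y + G.dist y v := hG.dist_triangle
    have h2 : G.dist u y = 1 := by
      rw [SimpleGraph.dist_comm]
      exact SimpleGraph.dist_eq_one_iff_adj.mpr ((hmemNy u).mp (hCsubNy hu))
    have h3 := hd_yv v hv
    have h4 : G.dist u v ≤ 2 := by omega
    exact_mod_cast h4
  have e_C' : ∀ v ∈ Cmn, ∀ u ∈ Nx, (G.dist u v : ℝ) ≤ 2 := by
    intro v hv u hu
    have h1 : G.dist u v ≤ G.dist u x + G.dist x v := hG.dist_triangle
    have h2 : G.dist x v = 1 :=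
      SimpleGraph.dist_eq_one_iff_adj.mpr ((hmemNx v).mp (hCsubNx hv))
    have h3 := hd_ux u hu
    have h4 : G.dist u v ≤ 2 := by omega
    exact_mod_cast h4
  have e_3 : ∀ u ∈ Nx, ∀ v ∈ Ny, (G.dist u v : ℝ) ≤ 3 := by
    intro u hu v hv
    have h1 : G.dist u v ≤ G.dist u x + G.dist x v := hG.dist_triangle
    have h2 : G.dist x v ≤ G.dist x y + G.dist y v := hG.dist_triangle
    have h3 : G.dist x y = 1 := SimpleGraph.dist_eq_one_iff_adj.mpr hxy
    have h4 := hd_ux u hu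
    have h5 := hd_yv v hv
    have h6 : G.dist u v ≤ 3 := by omega
    exact_mod_cast h6
  -- cost of the coupling
  have hpart1 : ∑ u ∈ Nx, ∑ v ∈ Ny, (G.dist u v : ℝ) * (if u = v then δf u else 0) = 0 := by
    refine Finset.sum_eq_zero fun u _ => Finset.sum_eq_zero fun v _ => ?_
    split_ifs with h
    · subst h; simp [SimpleGraph.dist_self]
    · rw [mul_zero]
  have hterm : ∀ u v, (G.dist u v : ℝ) * ξ u v = (G.dist u v : ℝ) * (if u = v then δf u else 0)
      + ∑ i : Fin 3, ∑ j : Fin 3, (G.dist u v : ℝ) * (M i j * (B i u * Gm j v)) := by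
    intro u v
    simp only [hξ]
    rw [mul_add]
    congr 1
    rw [Finset.mul_sum]
    exact Finset.sum_congr rfl fun i _ => Finset.mul_sum _ _ _
  have hsplit : ∑ u ∈ Nx, ∑ v ∈ Ny, (G.dist u v : ℝ) * ξ u v
      = ∑ i : Fin 3, ∑ j : Fin 3, ∑ u ∈ Nx, ∑ v ∈ Ny,
          (G.dist u v : ℝ) * (M i j * (B i u * Gm j v)) := by
    rw [Finset.sum_congr rfl fun u (_ : u ∈ Nx) =>
      Finset.sum_congr rfl fun v (_ : v ∈ Ny) => hterm u v]
    rw [Finset.sum_congr rfl fun u (_ : u ∈ Nx) => Finset.sum_add_distrib]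
    rw [Finset.sum_add_distrib, hpart1, zero_add]
    rw [Finset.sum_congr rfl fun u (_ : u ∈ Nx) =>
      sum_swap3 fun v i j => (G.dist u v : ℝ) * (M i j * (B i u * Gm j v))]
    exact sum_swap3 fun u i j => ∑ v ∈ Ny, (G.dist u v : ℝ) * (M i j * (B i u * Gm j v))
  have hBsumle : ∀ i, ∑ u ∈ Nx, B i u ≤ 1 := by
    intro i
    by_cases h : m i = 0
    · rw [Finset.sum_eq_zero fun u _ => hBzero i h u]; norm_num
    · rw [hBsum i h]
  have hGsumle : ∀ j, ∑ v ∈ Ny, Gm j v ≤ 1 := by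
    intro j
    by_cases h : m' j = 0
    · rw [Finset.sum_eq_zero fun v _ => hGzero j h v]; norm_num
    · rw [hGsum j h]
  have pairbound : ∀ (i j : Fin 3) (cv : ℝ), 0 ≤ cv →
      (∀ u ∈ Nx, ∀ v ∈ Ny, B i u ≠ 0 → Gm j v ≠ 0 → (G.dist u v : ℝ) ≤ cv) →
      ∑ u ∈ Nx, ∑ v ∈ Ny, (G.dist u v : ℝ) * (M i j * (B i u * Gm j v)) ≤ M i j * cv := by
    intro i j cv hcv hdd
    have step1 : ∑ u ∈ Nx, ∑ v ∈ Ny, (G.dist u v : ℝ) * (M i j * (B i u * Gm j v))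
        ≤ ∑ u ∈ Nx, ∑ v ∈ Ny, cv * (M i j * (B i u * Gm j v)) := by
      refine Finset.sum_le_sum fun u hu => Finset.sum_le_sum fun v hv => ?_
      by_cases hB0 : B i u = 0
      · rw [hB0]; simp
      · by_cases hG0 : Gm j v = 0
        · rw [hG0]; simp
        · exact mul_le_mul_of_nonneg_right (hdd u hu v hv hB0 hG0)
            (mul_nonneg (hMnn i j) (mul_nonneg (hBnn i u) (hGnn j v)))
    have step2 : ∑ u ∈ Nx, ∑ v ∈ Ny, cv * (M i j * (B i u * Gm j v))
        = (cv * M i j) * ((∑ u ∈ Nx, B i u) * (∑ v ∈ Ny, Gm j v)) := by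
      rw [Finset.sum_mul_sum Nx Ny (fun u => B i u) (fun v => Gm j v), Finset.mul_sum]
      refine Finset.sum_congr rfl fun u _ => ?_
      rw [Finset.mul_sum]
      exact Finset.sum_congr rfl fun v _ => by ring
    have h3 : 0 ≤ ∑ u ∈ Nx, B i u := Finset.sum_nonneg fun u _ => hBnn i u
    have h4 : 0 ≤ ∑ v ∈ Ny, Gm j v := Finset.sum_nonneg fun v _ => hGnn j v
    have step3 : (cv * M i j) * ((∑ u ∈ Nx, B i u) * (∑ v ∈ Ny, Gm j v)) ≤ (cv * M i j) * 1 := by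
      apply mul_le_mul_of_nonneg_left _ (mul_nonneg hcv (hMnn i j))
      exact mul_le_one₀ (hBsumle i) h4 (hGsumle j)
    calc ∑ u ∈ Nx, ∑ v ∈ Ny, (G.dist u v : ℝ) * (M i j * (B i u * Gm j v))
        ≤ ∑ u ∈ Nx, ∑ v ∈ Ny, cv * (M i j * (B i u * Gm j v)) := step1
      _ = (cv * M i j) * ((∑ u ∈ Nx, B i u) * (∑ v ∈ Ny, Gm j v)) := step2
      _ ≤ (cv * M i j) * 1 := step3
      _ = M i j * cv := by ring
  have bnd00 : ∑ u ∈ Nx, ∑ v ∈ Ny, (G.dist u v : ℝ) * (M 0 0 * (B 0 u * Gm 0 v)) ≤ M 0 0 * 1 :=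
    pairbound 0 0 1 (by norm_num) fun u hu v hv hB hG => by
      rw [hBsupp0 u hB]; exact e_y v hv
  have bnd01 : ∑ u ∈ Nx, ∑ v ∈ Ny, (G.dist u v : ℝ) * (M 0 1 * (B 0 u * Gm 1 v)) ≤ M 0 1 * 1 :=
    pairbound 0 1 1 (by norm_num) fun u hu v hv hB hG => by
      rw [hBsupp0 u hB]; exact e_y v hv
  have bnd02 : ∑ u ∈ Nx, ∑ v ∈ Ny, (G.dist u v : ℝ) * (M 0 2 * (B 0 u * Gm 2 v)) ≤ M 0 2 * 1 :=
    pairbound 0 2 1 (by norm_num) fun u hu v hv hB hG => by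
      rw [hBsupp0 u hB, hGsupp2 v hG]; exact e_x y hy_mem
  have bnd10 : ∑ u ∈ Nx, ∑ v ∈ Ny, (G.dist u v : ℝ) * (M 1 0 * (B 1 u * Gm 0 v)) ≤ M 1 0 * 2 :=
    pairbound 1 0 2 (by norm_num) fun u hu v hv hB hG =>
      e_C u (hBsupp1 u hB) v hv
  have bnd11 : ∑ u ∈ Nx, ∑ v ∈ Ny, (G.dist u v : ℝ) * (M 1 1 * (B 1 u * Gm 1 v)) ≤ M 1 1 * 2 :=
    pairbound 1 1 2 (by norm_num) fun u hu v hv hB hG =>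
      e_C u (hBsupp1 u hB) v hv
  have bnd12 : ∑ u ∈ Nx, ∑ v ∈ Ny, (G.dist u v : ℝ) * (M 1 2 * (B 1 u * Gm 2 v)) ≤ M 1 2 * 1 :=
    pairbound 1 2 1 (by norm_num) fun u hu v hv hB hG => by
      rw [hGsupp2 v hG]; exact e_x u hu
  have bnd20 : ∑ u ∈ Nx, ∑ v ∈ Ny, (G.dist u v : ℝ) * (M 2 0 * (B 2 u * Gm 0 v)) ≤ M 2 0 * 3 :=
    pairbound 2 0 3 (by norm_num) fun u hu v hv hB hG =>
      e_3 u hu v hv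
  have bnd21 : ∑ u ∈ Nx, ∑ v ∈ Ny, (G.dist u v : ℝ) * (M 2 1 * (B 2 u * Gm 1 v)) ≤ M 2 1 * 2 :=
    pairbound 2 1 2 (by norm_num) fun u hu v hv hB hG =>
      e_C' v (hGsupp1 v hG) u hu
  have bnd22 : ∑ u ∈ Nx, ∑ v ∈ Ny, (G.dist u v : ℝ) * (M 2 2 * (B 2 u * Gm 2 v)) ≤ M 2 2 * 1 :=
    pairbound 2 2 1 (by norm_num) fun u hu v hv hB hG => by
      rw [hGsupp2 v hG]; exact e_x u hu
  have hcost : ∑ u ∈ Nx, ∑ v ∈ Ny, (G.dist u v : ℝ) * ξ u v ≤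
      M 0 0 * 1 + M 0 1 * 1 + M 0 2 * 1 + (M 1 0 * 2 + M 1 1 * 2 + M 1 2 * 1)
        + (M 2 0 * 3 + M 2 1 * 2 + M 2 2 * 1) := by
    rw [hsplit]
    simp only [Fin.sum_univ_three]
    exact add_le_add (add_le_add (add_le_add (add_le_add bnd00 bnd01) bnd02)
      (add_le_add (add_le_add bnd10 bnd11) bnd12))
      (add_le_add (add_le_add bnd20 bnd21) bnd22)
  -- numeric bound on the block cost
  have hM20v : M 2 0 = max 0 (1 - a - b - Smax) := by
    rw [hM]; dsimp only
    rw [ex2, ex2', ey0, ey0']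
    unfold olap
    rw [min_eq_right (by linarith : Ry ≤ 1 - S), max_eq_left (by linarith : (0:ℝ) ≤ a + Dx)]
    congr 1
    linarith
  have hM02v : M 0 2 = max 0 (a + b - (1 - S)) := by
    rw [hM]; dsimp only
    rw [ex0, ex0', ey2, ey2']
    unfold olap
    rw [min_eq_left (by linarith : a ≤ 1 - S), max_eq_right (by linarith : (0:ℝ) ≤ Ry + Dy)]
    congr 1
    linarith
  have hr0 : M 0 0 + M 0 1 + M 0 2 = a := (hrow 0).trans hme.1
  have hr1 : M 1 0 + M 1 1 + M 1 2 = Dx := (hrow 1).trans hme.2.1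
  have hr2 : M 2 0 + M 2 1 + M 2 2 = Rx := (hrow 2).trans hme.2.2
  have hc2 : M 0 2 + M 1 2 + M 2 2 = b := (hcol 2).trans hm'e.2.2
  have hKbound : M 0 0 * 1 + M 0 1 * 1 + M 0 2 * 1 + (M 1 0 * 2 + M 1 1 * 2 + M 1 2 * 1)
        + (M 2 0 * 3 + M 2 1 * 2 + M 2 2 * 1)
      ≤ 1 - S + max 0 (1 - a - b - S) + max 0 (1 - a - b - Smax) := by
    rcases le_total (a + b) (1 - S) with hcase|hcase
    · have h1 : max (0:ℝ) (a + b - (1 - S)) = 0 := max_eq_left (by linarith)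
      have h2 : max (0:ℝ) (1 - a - b - S) = 1 - a - b - S := max_eq_right (by linarith)
      rw [h2]
      linarith [hr0, hr1, hr2, hc2, hM20v, hM02v.trans h1]
    · have h1 : max (0:ℝ) (a + b - (1 - S)) = a + b - (1 - S) := max_eq_right (by linarith)
      have h2 : max (0:ℝ) (1 - a - b - S) = 0 := max_eq_left (by linarith)
      rw [h2]
      linarith [hr0, hr1, hr2, hc2, hM20v, hM02v.trans h1]
  -- conclusion
  have hbdd : BddBelow {c : ℝ | ∃ ξ' : V → V → ℝ, IsWCoupling G w x y ξ' ∧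
      c = ∑ u ∈ G.neighborFinset x, ∑ v ∈ G.neighborFinset y, (G.dist u v : ℝ) * ξ' u v} := by
    refine ⟨0, ?_⟩
    rintro c ⟨ξ', hξ', rfl⟩
    exact Finset.sum_nonneg fun u _ => Finset.sum_nonneg fun v _ =>
      mul_nonneg (Nat.cast_nonneg _) (hξ'.1 u v)
  have hW1le : wW1 G w x y ≤ ∑ u ∈ Nx, ∑ v ∈ Ny, (G.dist u v : ℝ) * ξ u v := by
    rw [wW1]
    exact csInf_le hbdd ⟨ξ, hcoup, rfl⟩
  have hdist1 : ((G.dist x y : ℕ) : ℝ) = 1 := by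
    rw [SimpleGraph.dist_eq_one_iff_adj.mpr hxy]; norm_num
  have hric : wRicci G w x y = 1 - wW1 G w x y := by
    rw [wRicci, hdist1, div_one]
  rw [hric, ge_iff_le]
  have hpp1 : posPart' (1 - a - b - Smax) = max 0 (1 - a - b - Smax) := by
    rw [posPart', max_comm]
  have hpp2 : posPart' (1 - a - b - S) = max 0 (1 - a - b - S) := by
    rw [posPart', max_comm]
  rw [hpp1, hpp2]
  have hfin := hW1le.trans (hcost.trans hKbound)
  linarith [hfin]
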